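/- Let β_ε be the smooth convex approximation of absolute value (ε β(r/ε)), and for a C² flux F: ℝ → ℝ with F' of polynomial growth define F^{β_ε}(a,b) = ∫_b^a β_ε'(σ - b) F'(σ) dσ. Then there exist a constant C and p ∈ ℕ such that for all a, b ∈ ℝ: |F^{β_ε}(a,b) − sign(a−b)(F(a) − F(b))| ≤ ε·C·(1 + |a|^p + |b|^p). -/

import Mathlib

/-!
The error equals `∫_b^a (β_ε'(σ - b) - sign (a - b)) F'(σ) dσ`. Off the window `|σ - b| < ε`
we have `β_ε'(σ - b) = sign (σ - b) = sign (a - b)`, so the integrand is supported in a set of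
length at most `2ε`, on which it is bounded by `2 sup_{[a,b]} |F'| ≤ 2 C₀ (1 + |a|^p + |b|^p)`.
-/

open Set intervalIntegral MeasureTheory
open scoped Interval

lemma pow_abs_le_add_of_mem_uIcc {a b x : ℝ} (hx : x ∈ [[a, b]]) (n : ℕ) :
    |x| ^ n ≤ |a| ^ n + |b| ^ n := by
  have hx' : |x| ≤ max |a| |b| := by
    rcases le_total a b with h | h
    · rw [uIcc_of_le h] at hx
      exact abs_le_max_abs_abs hx.1 hx.2
    · rw [uIcc_of_ge h] at hx
      exact (abs_le_max_abs_abs hx.1 hx.2).trans_eq (max_comm _ _)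
  have := pow_le_pow_left₀ (abs_nonneg x) hx' n
  rcases max_cases |a| |b| with ⟨h, -⟩ | ⟨h, -⟩ <;> rw [h] at this <;>
    linarith [pow_nonneg (abs_nonneg a) n, pow_nonneg (abs_nonneg b) n]

lemma Real.sign_sub_eq_of_mem_uIoc {a b x : ℝ} (hx : x ∈ Ι b a) (hxb : x ≠ b) :
    Real.sign (x - b) = Real.sign (a - b) := by
  rcases le_total b a with h | h
  · rw [uIoc_of_le h] at hx
    rw [Real.sign_of_pos (by linarith [hx.1]), Real.sign_of_pos (by linarith [hx.1, hx.2])]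
  · rw [uIoc_of_ge h] at hx
    have : x < b := lt_of_le_of_ne hx.2 hxb
    rw [Real.sign_of_neg (by linarith), Real.sign_of_neg (by linarith [hx.1])]

lemma Real.sign_div_of_pos {x ε : ℝ} (hε : 0 < ε) : Real.sign (x / ε) = Real.sign x := by
  rcases lt_trichotomy x 0 with h | rfl | h
  · rw [Real.sign_of_neg h, Real.sign_of_neg (div_neg_of_neg_of_pos h hε)]
  · rw [zero_div]
  · rw [Real.sign_of_pos h, Real.sign_of_pos (div_pos h hε)]

lemma Real.abs_sign_le_one (x : ℝ) : |Real.sign x| ≤ 1 := by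
  rcases Real.sign_apply_eq x with h | h | h <;> simp [h]

lemma deriv_eq_sign_of_one_le_abs {β : ℝ → ℝ} (hdneg : ∀ r : ℝ, r ≤ -1 → deriv β r = -1)
    (hdpos : ∀ r : ℝ, 1 ≤ r → deriv β r = 1) {r : ℝ} (hr : 1 ≤ |r|) :
    deriv β r = Real.sign r := by
  rcases le_abs'.mp hr with h | h
  · rw [hdneg r h, Real.sign_of_neg (by linarith)]
  · rw [hdpos r h, Real.sign_of_pos (by linarith)]

lemma abs_deriv_le_one {β : ℝ → ℝ} (hdneg : ∀ r : ℝ, r ≤ -1 → deriv β r = -1)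
    (hdpos : ∀ r : ℝ, 1 ≤ r → deriv β r = 1) (hdmid : ∀ r : ℝ, |r| ≤ 1 → |deriv β r| ≤ 1)
    (r : ℝ) : |deriv β r| ≤ 1 := by
  rcases le_total |r| 1 with h | h
  · exact hdmid r h
  · rw [deriv_eq_sign_of_one_le_abs hdneg hdpos h]
    exact Real.abs_sign_le_one r

lemma abs_intervalIntegral_le_of_eq_zero_of_le_abs_sub {f : ℝ → ℝ} {a b c ε M : ℝ}
    (hε : 0 ≤ ε) (hM : 0 ≤ M) (hbound : ∀ x ∈ Ι a b, |f x| ≤ M)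
    (hvanish : ∀ x ∈ Ι a b, ε ≤ |x - c| → f x = 0) :
    |∫ x in a..b, f x| ≤ M * (2 * ε) := by
  rw [← Real.norm_eq_abs, norm_integral_eq_norm_integral_uIoc,
    setIntegral_eq_of_subset_of_forall_sdiff_eq_zero measurableSet_uIoc inter_subset_left
      fun x hx => hvanish x hx.1 <| le_of_not_gt fun h =>
        hx.2 ⟨hx.1, by rwa [Metric.mem_ball, Real.dist_eq]⟩]
  calc ‖∫ x in Ι a b ∩ Metric.ball c ε, f x‖
      ≤ M * volume.real (Ι a b ∩ Metric.ball c ε) :=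
        norm_setIntegral_le_of_norm_le_const
          (measure_mono inter_subset_right |>.trans_lt measure_ball_lt_top)
          (fun x hx => hbound x hx.1)
    _ ≤ M * volume.real (Metric.ball c ε) := by
        gcongr
        exacts [measure_ball_lt_top.ne, inter_subset_right]
    _ = M * (2 * ε) := by rw [Real.volume_real_ball hε]

lemma integral_sub_const_mul_deriv {g F : ℝ → ℝ} {a b : ℝ}
    (hg : IntervalIntegrable g volume b a) (hF : ContDiff ℝ 1 F) (s : ℝ) :
    ∫ x in b..a, (g x - s) * deriv F x = (∫ x in b..a, g x * deriv F x) - s * (F a - F b) := by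
  have hF' : Continuous (deriv F) := hF.continuous_deriv le_rfl
  simp_rw [sub_mul]
  rw [integral_sub (hg.mul_continuousOn hF'.continuousOn)
      ((hF'.intervalIntegrable _ _).const_mul s), intervalIntegral.integral_const_mul,
    integral_deriv_eq_sub (fun x _ => hF.differentiable one_ne_zero x) (hF'.intervalIntegrable _ _)]

lemma deriv_const_mul_comp_div {β : ℝ → ℝ} {ε : ℝ} (hε : ε ≠ 0) (r : ℝ) :
    deriv (fun s => ε * β (s / ε)) r = deriv β (r / ε) := by
  simp_rw [div_eq_inv_mul, deriv_const_mul_field, deriv_comp_mul_left, smul_eq_mul,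
    mul_inv_cancel_left₀ hε]

theorem stmt2_general (β : ℝ → ℝ)
    (hdneg : ∀ r : ℝ, r ≤ -1 → deriv β r = -1)
    (hdpos : ∀ r : ℝ, 1 ≤ r → deriv β r = 1)
    (hdmid : ∀ r : ℝ, |r| ≤ 1 → |deriv β r| ≤ 1)
    (F : ℝ → ℝ) (hF : ContDiff ℝ 2 F)
    (C₀ : ℝ) (p₀ : ℕ) (hF' : ∀ r : ℝ, |deriv F r| ≤ C₀ * (1 + |r| ^ p₀)) :
    ∃ (C : ℝ) (p : ℕ), ∀ ε : ℝ, 0 < ε → ∀ a b : ℝ,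
      |(∫ σ in b..a, deriv (fun s : ℝ => ε * β (s / ε)) (σ - b) * deriv F σ)
          - Real.sign (a - b) * (F a - F b)|
        ≤ ε * C * (1 + |a| ^ p + |b| ^ p) := by
  have hC₀ : 0 ≤ C₀ := nonneg_of_mul_nonneg_left ((abs_nonneg _).trans (hF' 0)) (by positivity)
  have hβ' : ∀ r, |deriv β r| ≤ 1 := abs_deriv_le_one hdneg hdpos hdmid
  refine ⟨4 * C₀, p₀, fun ε hε a b => ?_⟩
  have hg : IntervalIntegrable (fun σ => deriv β ((σ - b) / ε)) volume b a :=
    intervalIntegrable_const.mono_fun'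
      ((measurable_deriv β).comp (by fun_prop)).aestronglyMeasurable (ae_of_all _ fun σ => hβ' _)
  simp_rw [deriv_const_mul_comp_div hε.ne']
  rw [← integral_sub_const_mul_deriv hg (hF.of_le one_le_two)]
  calc _ ≤ (2 * (C₀ * (1 + |a| ^ p₀ + |b| ^ p₀))) * (2 * ε) :=
        abs_intervalIntegral_le_of_eq_zero_of_le_abs_sub (c := b) hε.le (by positivity) ?_ ?_
    _ = ε * (4 * C₀) * (1 + |a| ^ p₀ + |b| ^ p₀) := by ring
  · intro σ hσ
    have hσp : |σ| ^ p₀ ≤ |a| ^ p₀ + |b| ^ p₀ :=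
      pow_abs_le_add_of_mem_uIcc (uIcc_comm b a ▸ uIoc_subset_uIcc hσ) p₀
    rw [abs_mul]
    gcongr
    · exact (abs_sub _ _).trans (by linarith [hβ' ((σ - b) / ε), Real.abs_sign_le_one (a - b)])
    · exact (hF' σ).trans (mul_le_mul_of_nonneg_left (by linarith) hC₀)
  · intro σ hσ hfar
    have hσb : σ ≠ b := by rintro rfl; rw [sub_self, abs_zero] at hfar; linarith
    rw [deriv_eq_sign_of_one_le_abs hdneg hdpos (by rwa [abs_div, abs_of_pos hε, one_le_div hε]),
      Real.sign_div_of_pos hε, Real.sign_sub_eq_of_mem_uIoc hσ hσb, sub_self, zero_mul]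

/-- For the smooth convex approximation `β_ε (r) = ε β (r/ε)` of the absolute value and a
`C²` flux `F` with `F'` of polynomial growth, the entropy flux
`F^{β_ε}(a,b) = ∫_b^a β_ε'(σ - b) F'(σ) dσ` satisfies
`|F^{β_ε}(a,b) − sign(a−b)(F a − F b)| ≤ ε C (1 + |a|^p + |b|^p)`. -/
theorem stmt2 (β : ℝ → ℝ)
    (hβC2 : ContDiff ℝ 2 β)
    (hβnn : ∀ r, 0 ≤ β r)
    (hβconv : ConvexOn ℝ Set.univ β)
    (hβ0 : β 0 = 0)
    (hβeven : ∀ r, β (-r) = β r)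
    (hdneg : ∀ r : ℝ, r ≤ -1 → deriv β r = -1)
    (hdpos : ∀ r : ℝ, 1 ≤ r → deriv β r = 1)
    (hdmid : ∀ r : ℝ, |r| ≤ 1 → |deriv β r| ≤ 1)
    (F : ℝ → ℝ) (hF : ContDiff ℝ 2 F)
    (C₀ : ℝ) (p₀ : ℕ) (hF' : ∀ r : ℝ, |deriv F r| ≤ C₀ * (1 + |r| ^ p₀)) :
    ∃ (C : ℝ) (p : ℕ), ∀ ε : ℝ, 0 < ε → ∀ a b : ℝ,
      |(∫ σ in b..a, deriv (fun s : ℝ => ε * β (s / ε)) (σ - b) * deriv F σ)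
          - Real.sign (a - b) * (F a - F b)|
        ≤ ε * C * (1 + |a| ^ p + |b| ^ p) :=
  stmt2_general β hdneg hdpos hdmid F hF C₀ p₀ hF'
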